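/- arXiv:2506.03426 — 3 statements merged into one kernel-verified Lean document; each statement's English description precedes it below -/
import Mathlib

section
/- Let d_s, d_l be positive natural numbers, let x ∈ ℝ^{d_l} be a nonzero vector, and let h ∈ ℝ^{d_l}, λ ∈ ℝ, v ∈ ℝ^{d_s}, and A be a d_s × d_l real matrix. Then there exist a d_l × d_s real matrix W_down, a d_s × d_l real matrix W_up, and a scalar s ∈ ℝ such that h + s • ((x ᵥ* W_down) ᵥ* W_up) = h + λ • (v ᵥ* A), i.e. the LoRA-form increment s·(xᵀ W_down) W_up equals the ATV-form increment λ·v A exactly. -/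
open Matrix

/-- **ATV ⇒ LoRA (simulation).**
For a nonzero activation `x : ℝ^{d_l}`, any ATV increment `λ • (v ᵥ* A)` added to a hidden
state `h` can be reproduced exactly by a LoRA increment `s • ((x ᵥ* W_down) ᵥ* W_up)`
with rank budget `r = d_s`. -/
theorem atv_implies_lora (d_s d_l : ℕ) (hds : 0 < d_s) (hdl : 0 < d_l)
    (x : Fin d_l → ℝ) (hx : x ≠ 0)
    (h : Fin d_l → ℝ) (lam : ℝ) (v : Fin d_s → ℝ)
    (A : Matrix (Fin d_s) (Fin d_l) ℝ) :
    ∃ (Wdown : Matrix (Fin d_l) (Fin d_s) ℝ) (Wup : Matrix (Fin d_s) (Fin d_l) ℝ) (s : ℝ),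
      h + s • ((x ᵥ* Wdown) ᵥ* Wup) = h + lam • (v ᵥ* A) := by
  obtain ⟨i, hi⟩ : ∃ i, x i ≠ 0 := by
    by_contra hc
    push_neg at hc
    exact hx (funext hc)
  refine ⟨fun j k => if j = i then v k / x i else 0, A, lam, ?_⟩
  have hxv : (x ᵥ* fun j k => if j = i then v k / x i else 0) = v := by
    funext k
    simp only [vecMul, dotProduct]
    rw [Finset.sum_eq_single i]
    · rw [if_pos rfl]; field_simp
    · intro b _ hb; simp [hb]
    · intro hni; exact absurd (Finset.mem_univ i) hni
  rw [hxv]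
end

section
/- Let d_s, d_l be positive natural numbers and let x ∈ ℝ^{d_l} be a nonzero vector. Then the set of ATV increments {λ • (v ᵥ* A) : λ ∈ ℝ, v ∈ ℝ^{d_s}, A a d_s × d_l real matrix} is equal, as a subset of ℝ^{d_l}, to the set of LoRA increments {s • ((x ᵥ* W_down) ᵥ* W_up) : s ∈ ℝ, W_down a d_l × d_s real matrix, W_up a d_s × d_l real matrix}; hence under matched rank budgets r = d_s the two methods realize the same class of additive perturbations of the frozen hidden state. -/
open Matrix

/-- **ATV–LoRA equivalence under equal rank.**
For a nonzero activation `x : ℝ^{d_l}`, the set of ATV increments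
`{λ • (v ᵥ* A)}` coincides with the set of LoRA increments
`{s • ((x ᵥ* W_down) ᵥ* W_up)}` under matched rank budgets `r = d_s`. -/
theorem atv_lora_increment_sets_eq (d_s d_l : ℕ) (hds : 0 < d_s) (hdl : 0 < d_l)
    (x : Fin d_l → ℝ) (hx : x ≠ 0) :
    {y : Fin d_l → ℝ | ∃ (lam : ℝ) (v : Fin d_s → ℝ) (A : Matrix (Fin d_s) (Fin d_l) ℝ),
        y = lam • (v ᵥ* A)}
      = {y : Fin d_l → ℝ | ∃ (s : ℝ) (Wdown : Matrix (Fin d_l) (Fin d_s) ℝ)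
          (Wup : Matrix (Fin d_s) (Fin d_l) ℝ),
        y = s • ((x ᵥ* Wdown) ᵥ* Wup)} := by
  obtain ⟨i, hi⟩ : ∃ i, x i ≠ 0 := by
    by_contra h
    push_neg at h
    exact hx (funext h)
  ext y
  simp only [Set.mem_setOf_eq]
  constructor
  · rintro ⟨lam, v, A, rfl⟩
    refine ⟨lam, Matrix.of fun j k => if j = i then v k / x i else 0, A, ?_⟩
    have hxW : x ᵥ* (Matrix.of fun j k => if j = i then v k / x i else 0) = v := by
      funext k
      simp only [vecMul, dotProduct, Matrix.of_apply, mul_ite, mul_zero]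
      rw [Finset.sum_ite_eq' Finset.univ i]
      field_simp
      exact if_pos (Finset.mem_univ i)
    rw [hxW]
  · rintro ⟨s, Wdown, Wup, rfl⟩
    exact ⟨s, x ᵥ* Wdown, Wup, rfl⟩
end

section
/- Let T, m, d be positive natural numbers, let x be a T × d real matrix, C an m × d real matrix, W_q, W_k, W_v be d × d real matrices, v ∈ ℝ^d, and let e_T ∈ ℝ^T and e_m ∈ ℝ^m be the indicator vectors of the last position. Set Q = x * W_q, P_q' = (e_T vᵀ) * W_q, K_C = C * W_k, P_k' = (e_m vᵀ) * W_k, V_C = C * W_v, P_v' = (e_m vᵀ) * W_v. Then the linearized ATV attention equals the linearized prefix-tuned attention with the induced single-row prefixes P_k', P_v', plus an explicit cross-term correction: ((x + e_T vᵀ) * W_q) * ((C + e_m vᵀ) * W_k)ᵀ * ((C + e_m vᵀ) * W_v) − ( Q * (fromRows P_k' (C * W_k))ᵀ * (fromRows P_v' (C * W_v)) ) = Q P_k'ᵀ V_C + Q K_Cᵀ P_v' + P_q' K_Cᵀ V_C + P_q' P_k'ᵀ V_C + P_q' K_Cᵀ P_v' + P_q' P_k'ᵀ P_v'; in particular every linearized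 prefix-tuned output arising from prefixes of this induced form is realized by the linearized ATV attention when the six cross terms cancel, so the prefix-tuned term Q P_k'ᵀ P_v' + Q K_Cᵀ V_C always appears as a subexpression of the ATV expansion. -/
open Matrix

/-! Linearized attention `Q Kᵀ V` is additive in each of its three arguments, so the ATV
attention expands into eight terms, while stacking a prefix row onto the keys and values splits
the prefix-tuned attention into exactly two of them: the prefix term `Q P_k'ᵀ P_v'` and the
context term `Q K_Cᵀ V_C`. -/

namespace Matrix

variable {l m n o p : Type*} [Fintype m] [Fintype p] {R : Type*}

theorem mul_transpose_fromRows_mul_fromRows [Fintype n] [Semiring R] (Q : Matrix l p R)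
    (P : Matrix m p R) (K : Matrix n p R) (A : Matrix m o R) (B : Matrix n o R) :
    Q * (fromRows P K)ᵀ * fromRows A B = Q * Pᵀ * A + Q * Kᵀ * B := by
  rw [transpose_fromRows, Matrix.mul_assoc, fromCols_mul_fromRows, Matrix.mul_add,
    Matrix.mul_assoc, Matrix.mul_assoc]

theorem add_mul_transpose_add_mul_add [NonUnitalNonAssocSemiring R] (Q Q' : Matrix l p R)
    (K K' : Matrix m p R) (V V' : Matrix m o R) :
    (Q + Q') * (K + K')ᵀ * (V + V') =
      Q * Kᵀ * V + Q * Kᵀ * V' + Q * K'ᵀ * V + Q * K'ᵀ * V'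
        + Q' * Kᵀ * V + Q' * Kᵀ * V' + Q' * K'ᵀ * V + Q' * K'ᵀ * V' := by
  simp only [transpose_add, Matrix.add_mul, Matrix.mul_add]
  abel

end Matrix

theorem atv_attention_eq_prefix_plus_cross_terms_general (T m d : ℕ)
    (x : Matrix (Fin T) (Fin d) ℝ) (C : Matrix (Fin m) (Fin d) ℝ)
    (Wq Wk Wv : Matrix (Fin d) (Fin d) ℝ) (v : Fin d → ℝ)
    (eT : Fin T → ℝ) (em : Fin m → ℝ)
    (Q Pq' : Matrix (Fin T) (Fin d) ℝ)
    (KC Pk' VC Pv' : Matrix (Fin m) (Fin d) ℝ)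
    (hQ : Q = x * Wq) (hPq : Pq' = Matrix.vecMulVec eT v * Wq)
    (hKC : KC = C * Wk) (hPk : Pk' = Matrix.vecMulVec em v * Wk)
    (hVC : VC = C * Wv) (hPv : Pv' = Matrix.vecMulVec em v * Wv) :
    ((x + Matrix.vecMulVec eT v) * Wq) * ((C + Matrix.vecMulVec em v) * Wk)ᵀ *
          ((C + Matrix.vecMulVec em v) * Wv)
        - (Q * (Matrix.fromRows Pk' (C * Wk))ᵀ * (Matrix.fromRows Pv' (C * Wv)))
      = Q * Pk'ᵀ * VC + Q * KCᵀ * Pv'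
        + Pq' * KCᵀ * VC + Pq' * Pk'ᵀ * VC + Pq' * KCᵀ * Pv' + Pq' * Pk'ᵀ * Pv' := by
  rw [Matrix.add_mul x, Matrix.add_mul C _ Wk, Matrix.add_mul C _ Wv,
    ← hQ, ← hPq, ← hKC, ← hPk, ← hVC, ← hPv,
    add_mul_transpose_add_mul_add, mul_transpose_fromRows_mul_fromRows]
  abel

/-- **Linearized ATV attention = prefix-tuned attention + six cross terms.**
With linearized attention `Attn(Q,K,V) = Q Kᵀ V`, the ATV attention (injecting `v` into the
last rows via the indicator vectors `e_T`, `e_m`) differs from the prefix-tuned attention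
built from the induced prefixes `P_k' = (e_m vᵀ) W_k`, `P_v' = (e_m vᵀ) W_v` exactly by the
six cross terms; in particular the prefix-tuned term `Q P_k'ᵀ P_v' + Q K_Cᵀ V_C` always
appears as a subexpression of the ATV expansion. -/
theorem atv_attention_eq_prefix_plus_cross_terms (T m d : ℕ)
    (hT : 0 < T) (hm : 0 < m) (hd : 0 < d)
    (x : Matrix (Fin T) (Fin d) ℝ) (C : Matrix (Fin m) (Fin d) ℝ)
    (Wq Wk Wv : Matrix (Fin d) (Fin d) ℝ) (v : Fin d → ℝ)
    (eT : Fin T → ℝ) (em : Fin m → ℝ)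
    (heT : eT = fun i => if i.val = T - 1 then 1 else 0)
    (hem : em = fun i => if i.val = m - 1 then 1 else 0)
    (Q Pq' : Matrix (Fin T) (Fin d) ℝ)
    (KC Pk' VC Pv' : Matrix (Fin m) (Fin d) ℝ)
    (hQ : Q = x * Wq) (hPq : Pq' = Matrix.vecMulVec eT v * Wq)
    (hKC : KC = C * Wk) (hPk : Pk' = Matrix.vecMulVec em v * Wk)
    (hVC : VC = C * Wv) (hPv : Pv' = Matrix.vecMulVec em v * Wv) :
    ((x + Matrix.vecMulVec eT v) * Wq) * ((C + Matrix.vecMulVec em v) * Wk)ᵀ *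
          ((C + Matrix.vecMulVec em v) * Wv)
        - (Q * (Matrix.fromRows Pk' (C * Wk))ᵀ * (Matrix.fromRows Pv' (C * Wv)))
      = Q * Pk'ᵀ * VC + Q * KCᵀ * Pv'
        + Pq' * KCᵀ * VC + Pq' * Pk'ᵀ * VC + Pq' * KCᵀ * Pv' + Pq' * Pk'ᵀ * Pv' :=
  atv_attention_eq_prefix_plus_cross_terms_general T m d x C Wq Wk Wv v eT em Q Pq' KC Pk' VC Pv' hQ
    hPq hKC hPk hVC hPv
end
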